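/- arXiv:1603.00286 — 5 statements merged into one kernel-verified Lean document; each statement's English description precedes it below -/
import Mathlib

section
/- Let r = p/q with p < q positive integers, and let V_1,...,V_n be finite measures on C. Given partitions Z and Y of C, suppose for every pair (i,j), Z_i ∩ Y_j is partitioned into q measurable pieces each of V_i-measure exactly V_i(Z_i ∩ Y_j)/q, agent j takes a union of p of these pieces maximizing its own V_j-measure, and agent i takes the remaining q−p pieces. Then the resulting allocation X satisfies V_i(X_i) ≥ (p/q)·V_i(Y_i) + (1−p/q)·V_i(Z_i) for every i. -/
open MeasureTheory ENNReal

lemma exchange_avg {p q : ℕ} (hpq : p < q) (f : Fin q → ℝ≥0∞) (sel : Finset (Fin q))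
    (hmax : ∀ S : Finset (Fin q), S.card = p → ∑ t ∈ S, f t ≤ ∑ t ∈ sel, f t) :
    (p : ℝ≥0∞) / q * ∑ t, f t ≤ ∑ t ∈ sel, f t := by
  have hq0 : (q : ℝ≥0∞) ≠ 0 := by exact_mod_cast (Nat.zero_lt_of_lt hpq).ne'
  haveI : NeZero q := ⟨(Nat.zero_lt_of_lt hpq).ne'⟩
  have hinj : ∀ r : Fin q, Function.Injective (fun k : Fin p => r + Fin.castLE hpq.le k) := by
    intro r k1 k2 h
    exact Fin.castLE_injective _ (add_left_cancel h)
  have key : ∀ r : Fin q, ∑ k : Fin p, f (r + Fin.castLE hpq.le k) ≤ ∑ t ∈ sel, f t := by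
    intro r
    have hcard : (Finset.univ.image (fun k : Fin p => r + Fin.castLE hpq.le k)).card = p := by
      rw [Finset.card_image_of_injective _ (hinj r), Finset.card_univ, Fintype.card_fin]
    have := hmax _ hcard
    rwa [Finset.sum_image (fun x _ y _ h => hinj r h)] at this
  have htot : ∑ r : Fin q, ∑ k : Fin p, f (r + Fin.castLE hpq.le k)
      = (p : ℝ≥0∞) * ∑ t, f t := by
    rw [Finset.sum_comm]
    have : ∀ k : Fin p, ∑ r : Fin q, f (r + Fin.castLE hpq.le k) = ∑ t, f t := by
      intro k
      exact Fintype.sum_equiv (Equiv.addRight (Fin.castLE hpq.le k)) _ _ (fun r => rfl)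
    simp [this, Finset.sum_const, nsmul_eq_mul]
  have hle : (p : ℝ≥0∞) * ∑ t, f t ≤ (q : ℝ≥0∞) * ∑ t ∈ sel, f t := by
    rw [← htot]
    calc ∑ r : Fin q, ∑ k : Fin p, f (r + Fin.castLE hpq.le k)
        ≤ ∑ _r : Fin q, ∑ t ∈ sel, f t := Finset.sum_le_sum (fun r _ => key r)
      _ = (q : ℝ≥0∞) * ∑ t ∈ sel, f t := by simp [Finset.sum_const, nsmul_eq_mul]
  rw [div_eq_mul_inv, mul_right_comm, ← div_eq_mul_inv]
  rw [ENNReal.div_le_iff hq0 (by exact_mod_cast (natCast_ne_top q))]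
  calc (p : ℝ≥0∞) * ∑ t, f t ≤ (q : ℝ≥0∞) * ∑ t ∈ sel, f t := hle
    _ = (∑ t ∈ sel, f t) * q := mul_comm _ _

/-- The constructive exchange protocol: each `Z i ∩ Y j` is cut by agent `i` into `q`
pieces of equal `V i`-value; agent `j` takes a `V j`-best selection of `p` of them and
agent `i` keeps the remaining `q - p`. The resulting allocation `X` gives every agent `i`
value at least `(p/q)·V_i(Y_i) + (1 - p/q)·V_i(Z_i)`. -/
theorem exchange_protocol {C : Type*} [MeasurableSpace C] (n p q : ℕ)
    (hp : 0 < p) (hpq : p < q)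
    (V : Fin n → Measure C)
    (hfin : ∀ i, IsFiniteMeasure (V i))
    (Z Y : Fin n → Set C)
    (hZmeas : ∀ i, MeasurableSet (Z i)) (hYmeas : ∀ i, MeasurableSet (Y i))
    (hZdisj : Pairwise (Function.onFun Disjoint Z))
    (hYdisj : Pairwise (Function.onFun Disjoint Y))
    (hZcover : (⋃ i, Z i) = Set.univ) (hYcover : (⋃ i, Y i) = Set.univ)
    -- the `q` pieces into which agent `i` divides `Z i ∩ Y j`
    (piece : Fin n → Fin n → Fin q → Set C)
    (hpmeas : ∀ i j t, MeasurableSet (piece i j t))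
    (hpdisj : ∀ i j, Pairwise (Function.onFun Disjoint (piece i j)))
    (hpcover : ∀ i j, (⋃ t, piece i j t) = Z i ∩ Y j)
    (hequal : ∀ i j t, V i (piece i j t) = V i (Z i ∩ Y j) / q)
    -- the selection of `p` pieces taken by agent `j` from `Z i ∩ Y j`,
    -- maximizing agent `j`'s value
    (sel : Fin n → Fin n → Finset (Fin q))
    (hselcard : ∀ i j, (sel i j).card = p)
    (hselmax : ∀ i j (S : Finset (Fin q)), S.card = p →
      (∑ t ∈ S, V j (piece i j t)) ≤ ∑ t ∈ sel i j, V j (piece i j t))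
    -- the resulting allocation
    (X : Fin n → Set C)
    (hX : ∀ a, X a =
      (⋃ i, ⋃ t ∈ sel i a, piece i a t) ∪ (⋃ j, ⋃ t ∈ (sel a j)ᶜ, piece a j t)) :
    ∀ i, ((p : ℝ) / q) * (V i (Y i)).toReal + (1 - (p : ℝ) / q) * (V i (Z i)).toReal
      ≤ (V i (X i)).toReal := by
  intro i
  haveI := hfin i
  have hq0 : (q : ℝ≥0∞) ≠ 0 := by exact_mod_cast (Nat.zero_lt_of_lt hpq).ne'
  have hsub : ∀ a b t, piece a b t ⊆ Z a ∩ Y b := by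
    intro a b t
    rw [← hpcover a b]
    exact Set.subset_iUnion _ t
  set A : Set C := ⋃ k, ⋃ t ∈ sel k i, piece k i t with hA_def
  set B : Set C := ⋃ j, ⋃ t ∈ (sel i j)ᶜ, piece i j t with hB_def
  have hAmeas : MeasurableSet A :=
    MeasurableSet.iUnion fun k =>
      MeasurableSet.biUnion (Set.to_countable _) fun t _ => hpmeas k i t
  have hBmeas : MeasurableSet B :=
    MeasurableSet.iUnion fun j =>
      MeasurableSet.biUnion (Set.to_countable _) fun t _ => hpmeas i j t
  -- A and B are disjoint
  have hABdisj : Disjoint A B := by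
    rw [Set.disjoint_left]
    rintro x hxA hxB
    simp only [hA_def, hB_def, Set.mem_iUnion] at hxA hxB
    obtain ⟨k, t, ht, hxt⟩ := hxA
    obtain ⟨j, s, hs, hxs⟩ := hxB
    have hk : k = i := by
      by_contra h
      exact Set.disjoint_left.mp (hZdisj h) (hsub k i t hxt).1 (hsub i j s hxs).1
    have hj : j = i := by
      by_contra h
      exact Set.disjoint_left.mp (hYdisj h) (hsub i j s hxs).2 (hsub k i t hxt).2
    rw [hk] at ht hxt
    rw [hj] at hs hxs
    have hts : t ≠ s := fun h => (Finset.mem_compl.mp hs) (h ▸ ht)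
    exact Set.disjoint_left.mp (hpdisj i i hts) hxt hxs
  -- cell totals
  have hcell : ∀ a b, ∑ t, V i (piece a b t) = V i (Z a ∩ Y b) := by
    intro a b
    rw [← hpcover a b, measure_iUnion (hpdisj a b) (hpmeas a b), tsum_fintype]
  -- value of A
  have hAval : V i A = ∑ k, ∑ t ∈ sel k i, V i (piece k i t) := by
    rw [hA_def, measure_iUnion, tsum_fintype]
    · congr 1
      funext k
      exact measure_biUnion_finset ((hpdisj k i).set_pairwise _)
        (fun t _ => hpmeas k i t)
    · intro k k' hkk'
      refine (hZdisj hkk').mono ?_ ?_ <;>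
        exact Set.iUnion₂_subset fun t _ => (hsub _ i t).trans Set.inter_subset_left
    · intro k
      exact MeasurableSet.biUnion (Set.to_countable _) fun t _ => hpmeas k i t
  -- value of B
  have hBval : V i B = ∑ j, ∑ t ∈ (sel i j)ᶜ, V i (piece i j t) := by
    rw [hB_def, measure_iUnion, tsum_fintype]
    · congr 1
      funext j
      exact measure_biUnion_finset ((hpdisj i j).set_pairwise _)
        (fun t _ => hpmeas i j t)
    · intro j j' hjj'
      refine (hYdisj hjj').mono ?_ ?_ <;>
        exact Set.iUnion₂_subset fun t _ => (hsub i _ t).trans Set.inter_subset_right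
    · intro j
      exact MeasurableSet.biUnion (Set.to_countable _) fun t _ => hpmeas i j t
  -- decompositions of Y i and Z i
  have hYdecomp : V i (Y i) = ∑ k, V i (Z k ∩ Y i) := by
    have hset : Y i = ⋃ k, Z k ∩ Y i := by
      rw [← Set.iUnion_inter, hZcover, Set.univ_inter]
    conv_lhs => rw [hset]
    rw [measure_iUnion
      (fun k k' hkk' => (hZdisj hkk').mono Set.inter_subset_left Set.inter_subset_left)
      (fun k => (hZmeas k).inter (hYmeas i)), tsum_fintype]
  have hZdecomp : V i (Z i) = ∑ j, V i (Z i ∩ Y j) := by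
    have hset : Z i = ⋃ j, Z i ∩ Y j := by
      rw [← Set.inter_iUnion, hYcover, Set.inter_univ]
    conv_lhs => rw [hset]
    rw [measure_iUnion
      (fun j j' hjj' => (hYdisj hjj').mono Set.inter_subset_right Set.inter_subset_right)
      (fun j => (hZmeas i).inter (hYmeas j)), tsum_fintype]
  -- lower bound on A
  have hAbound : (p : ℝ≥0∞) / q * V i (Y i) ≤ V i A := by
    rw [hAval, hYdecomp, Finset.mul_sum]
    refine Finset.sum_le_sum fun k _ => ?_
    have := exchange_avg hpq (fun t => V i (piece k i t)) (sel k i) (hselmax k i)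
    rwa [hcell k i] at this
  -- exact value of B
  have hBbound : ((q - p : ℕ) : ℝ≥0∞) / q * V i (Z i) ≤ V i B := by
    rw [hBval, hZdecomp, Finset.mul_sum]
    refine Finset.sum_le_sum fun j _ => ?_
    have hcompl : ∀ t ∈ (sel i j)ᶜ, V i (piece i j t) = V i (Z i ∩ Y j) / q :=
      fun t _ => hequal i j t
    rw [Finset.sum_congr rfl hcompl, Finset.sum_const, Finset.card_compl, hselcard i j,
      Fintype.card_fin, nsmul_eq_mul, div_eq_mul_inv, div_eq_mul_inv, mul_assoc,
      mul_comm ((q:ℝ≥0∞))⁻¹]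
  -- ENNReal inequality
  have hENN : (p : ℝ≥0∞) / q * V i (Y i) + ((q - p : ℕ) : ℝ≥0∞) / q * V i (Z i)
      ≤ V i (X i) := by
    rw [hX i, ← hA_def, ← hB_def, measure_union hABdisj hBmeas]
    exact add_le_add hAbound hBbound
  -- pass to reals
  have hfinX : V i (X i) ≠ ⊤ := measure_ne_top _ _
  have hmono := ENNReal.toReal_mono hfinX hENN
  have hqR : (q : ℝ) ≠ 0 := by exact_mod_cast (Nat.zero_lt_of_lt hpq).ne'
  have heq : ((p : ℝ≥0∞) / q * V i (Y i) + ((q - p : ℕ) : ℝ≥0∞) / q * V i (Z i)).toReal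
      = ((p : ℝ) / q) * (V i (Y i)).toReal + (1 - (p : ℝ) / q) * (V i (Z i)).toReal := by
    rw [ENNReal.toReal_add, ENNReal.toReal_mul, ENNReal.toReal_mul,
      ENNReal.toReal_div, ENNReal.toReal_div]
    · simp only [ENNReal.toReal_natCast]
      congr 1
      rw [Nat.cast_sub hpq.le, sub_div, div_self hqR]
    · exact ENNReal.mul_ne_top
        ((ENNReal.div_lt_top (ENNReal.natCast_ne_top p) hq0).ne) (measure_ne_top _ _)
    · exact ENNReal.mul_ne_top
        ((ENNReal.div_lt_top (ENNReal.natCast_ne_top _) hq0).ne) (measure_ne_top _ _)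
  rw [heq] at hmono
  exact hmono
end

section
/- The bound 1/(n+m−1) of the archipelago division is tight: for every n ≥ 1 and m ≥ 1 there exist m pairwise-disjoint islands and n identical measures (each agent values islands Z_1,...,Z_{m−1} as 1 each and island Z_m as n), such that in every allocation where each agent's piece is contained in a single island, some agent receives value at most 1 = V(C)/(n+m−1). -/
/-!
Take unit intervals as islands and weight Lebesgue measure by `1` on the first `m - 1` of them
and by `n` on the last. A piece inside one of the first `m - 1` islands is worth at most `1`;
otherwise all `n` pairwise disjoint pieces lie in the last island, of total value `n`, and the
least valuable of them is worth at most `1`.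
-/

open MeasureTheory

section

variable {α : Type*} [MeasurableSpace α]

theorem exists_card_nsmul_measure_le {ι : Type*} [Fintype ι] [Nonempty ι] (μ : Measure α)
    {X : ι → Set α} {S : Set α} (hX : ∀ i, MeasurableSet (X i))
    (hXd : Pairwise (Function.onFun Disjoint X)) (hXS : ∀ i, X i ⊆ S) :
    ∃ i, Fintype.card ι • μ (X i) ≤ μ S := by
  obtain ⟨i, -, hi⟩ := Finset.univ.exists_min_image (fun i => μ (X i)) Finset.univ_nonempty
  refine ⟨i, ?_⟩
  calc Fintype.card ι • μ (X i) ≤ ∑ j, μ (X j) := Finset.card_nsmul_le_sum _ _ _ hi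
    _ = μ (⋃ j, X j) := by rw [measure_iUnion hXd hX, tsum_fintype]
    _ ≤ μ S := measure_mono (Set.iUnion_subset hXS)

theorem exists_measure_le_one_of_subset_islands {ι κ : Type*} [Fintype ι] [Nonempty ι]
    (μ : Measure α) {Z : κ → Set α} (k : κ) (hZ : ∀ j ≠ k, μ (Z j) ≤ 1)
    (hZk : μ (Z k) ≤ Fintype.card ι) {X : ι → Set α} (hX : ∀ i, MeasurableSet (X i))
    (hXd : Pairwise (Function.onFun Disjoint X)) (hXZ : ∀ i, ∃ j, X i ⊆ Z j) :
    ∃ i, μ (X i) ≤ 1 := by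
  by_cases h_small : ∃ i j, j ≠ k ∧ X i ⊆ Z j
  · obtain ⟨i, j, hjk, hij⟩ := h_small
    exact ⟨i, (measure_mono hij).trans (hZ j hjk)⟩
  have h_big : ∀ i, X i ⊆ Z k := fun i => by
    obtain ⟨j, hij⟩ := hXZ i
    obtain rfl : j = k := by_contra fun hjk => h_small ⟨i, j, hjk, hij⟩
    exact hij
  obtain ⟨i, hi⟩ := exists_card_nsmul_measure_le μ hX hXd h_big
  have hcard : (Fintype.card ι : ENNReal) ≠ 0 := by simp
  refine ⟨i, (ENNReal.mul_le_mul_iff_right hcard (ENNReal.natCast_ne_top _)).mp ?_⟩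
  rw [mul_one, ← nsmul_eq_mul]
  exact hi.trans hZk

theorem sum_smul_restrict_apply_of_pairwise_disjoint {κ : Type*} [Fintype κ] (μ : Measure α)
    (w : κ → ENNReal) {Z : κ → Set α} (hZ : ∀ j, MeasurableSet (Z j))
    (hZd : Pairwise (Function.onFun Disjoint Z)) (k : κ) :
    (∑ j, w j • μ.restrict (Z j)) (Z k) = w k * μ (Z k) := by
  rw [Measure.finsetSum_apply, Finset.sum_eq_single k]
  · rw [Measure.smul_apply, Measure.restrict_apply (hZ k), Set.inter_self, smul_eq_mul]
  · intro j _ hjk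
    rw [Measure.smul_apply, Measure.restrict_apply (hZ k), (hZd hjk.symm).inter_eq,
      measure_empty, smul_zero]
  · simp

end

theorem pairwise_disjoint_Ico_natCast_of_injective {ι : Type*} {f : ι → ℕ} (hf : f.Injective) :
    Pairwise (Function.onFun Disjoint fun i => Set.Ico (f i : ℝ) (f i + 1)) := fun i j hij => by
  simpa using Set.pairwise_disjoint_Ico_intCast ℝ
    (Nat.cast_injective.ne (hf.ne hij) : (f i : ℤ) ≠ f j)

/-- Tightness of the `1/(n+m-1)` archipelago bound: for every `n ≥ 1` and `m ≥ 1` there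
exist `m` pairwise-disjoint islands and a common measure valuing each of the first `m-1`
islands as `1` and the last island as `n`, such that in every allocation of
pairwise-disjoint pieces, each contained in a single island, some agent gets value at
most `1 = V(C)/(n+m-1)`. -/
theorem archipelago_bound_tight (n m : ℕ) (hn : 0 < n) (hm : 0 < m) :
    ∃ (Z : Fin m → Set ℝ) (V : Measure ℝ),
      (∀ j, MeasurableSet (Z j)) ∧
      Pairwise (Function.onFun Disjoint Z) ∧
      (∀ j : Fin m, (j : ℕ) < m - 1 → (V (Z j)).toReal = 1) ∧
      (V (Z ⟨m - 1, Nat.sub_lt hm one_pos⟩)).toReal = n ∧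
      ∀ X : Fin n → Set ℝ,
        (∀ i, MeasurableSet (X i)) →
        Pairwise (Function.onFun Disjoint X) →
        (∀ i, ∃ j, X i ⊆ Z j) →
        ∃ i, (V (X i)).toReal ≤ 1 := by
  set last : Fin m := ⟨m - 1, Nat.sub_lt hm one_pos⟩
  set Z : Fin m → Set ℝ := fun j => Set.Ico (j : ℝ) (j + 1)
  set w : Fin m → ENNReal := fun j => if (j : ℕ) < m - 1 then 1 else n
  set V : Measure ℝ := ∑ j, w j • volume.restrict (Z j)
  have hZ : ∀ j, MeasurableSet (Z j) := fun j => measurableSet_Ico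
  have hZd : Pairwise (Function.onFun Disjoint Z) :=
    pairwise_disjoint_Ico_natCast_of_injective Fin.val_injective
  have hVZ : ∀ j, V (Z j) = w j := fun j => by
    simp [V, sum_smul_restrict_apply_of_pairwise_disjoint _ w hZ hZd j, Z, Real.volume_Ico]
  have hVZ_early : ∀ j : Fin m, (j : ℕ) < m - 1 → V (Z j) = 1 := fun j hj => by
    simp [hVZ, w, hj]
  have hVZ_last : V (Z last) = n := by simp [hVZ, w, last]
  refine ⟨Z, V, hZ, hZd, fun j hj => by simp [hVZ_early j hj], by simp [hVZ_last], ?_⟩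
  intro X hX hXd hXZ
  have : Nonempty (Fin n) := ⟨⟨0, hn⟩⟩
  have hZ_early : ∀ j ≠ last, V (Z j) ≤ 1 := fun j hj =>
    (hVZ_early j (by have := Fin.val_ne_of_ne hj; simp only [last] at this; omega)).le
  obtain ⟨i, hi⟩ := exists_measure_le_one_of_subset_islands V last hZ_early
    (by simp [hVZ_last]) hX hXd hXZ
  exact ⟨i, ENNReal.toReal_le_of_le_ofReal zero_le_one (by simpa using hi)⟩
end

section
/- Let a_0,...,a_{n−1} ∈ [0,1] with the constraints that the ratio R(a) = (Σ_k a_k) / (Σ_k max(k·a_k, 1)) is maximized. Then in a maximizing sequence there is no index k > 0 with 1/k < a_k < 1. -/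
lemma aux_gauss : ∀ m : ℕ, 1 ≤ m → (∑ j ∈ Finset.range m, max j 1) * 2 = m * (m - 1) + 2 := by
  intro m hm
  induction m with
  | zero => omega
  | succ t ih =>
    rcases Nat.eq_or_lt_of_le hm with h | h
    · simp [← h]
    · have ht : 1 ≤ t := by omega
      rw [Finset.sum_range_succ, add_mul, ih ht]
      have hmx : max t 1 = t := by omega
      rw [hmx]
      rcases t with _ | s
      · omega
      · simp only [Nat.add_sub_cancel]
        ring

lemma no_int_sum (K0 n : ℕ) (hK : 2 ≤ K0) (hn : 2 * K0 < n) (z : ℤ)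
    (hz : (K0 : ℝ) * ∑ j ∈ Finset.Ico (K0 + 1) n, 1 / (j : ℝ) = (z : ℝ)) : False := by
  set h := (n - 1) / 2 with hh
  have hh0 : h ≠ 0 := by omega
  obtain ⟨p, pp, hp1, hp2⟩ := Nat.exists_prime_lt_and_le_two_mul h hh0
  have hpK : K0 < p := by omega
  have hpn : p < n := by omega
  have h2p : n ≤ 2 * p := by omega
  have hpS : p ∈ Finset.Ico (K0 + 1) n := by
    rw [Finset.mem_Ico]; omega
  set T := (Finset.Ico (K0 + 1) n).erase p with hT
  have hTj : ∀ j ∈ T, K0 + 1 ≤ j ∧ j < n ∧ j ≠ p := by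
    intro j hj
    rw [hT, Finset.mem_erase, Finset.mem_Ico] at hj
    exact ⟨hj.2.1, hj.2.2, hj.1⟩
  set L := ∏ j ∈ T, j with hL
  set A := ∑ j ∈ T, L / j with hAdef
  set S := ∑ j ∈ T, 1 / (j : ℝ) with hS
  have hp0 : (p : ℝ) ≠ 0 := Nat.cast_ne_zero.mpr pp.pos.ne'
  -- split the sum
  have hsplit : (1 : ℝ) / p + S = ∑ j ∈ Finset.Ico (K0 + 1) n, 1 / (j : ℝ) := by
    rw [hS, hT]
    exact Finset.add_sum_erase _ (fun j : ℕ => (1 : ℝ) / (j : ℝ)) hpS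
  rw [← hsplit] at hz
  have hA : (A : ℝ) = (L : ℝ) * S := by
    rw [hAdef, Nat.cast_sum, hS, Finset.mul_sum]
    refine Finset.sum_congr rfl fun j hj => ?_
    have hj0 : (j : ℝ) ≠ 0 := Nat.cast_ne_zero.mpr (by have := hTj j hj; omega)
    rw [Nat.cast_div (Finset.dvd_prod_of_mem _ hj) hj0, mul_one_div]
  have key2 : (K0 : ℝ) * L + (K0 : ℝ) * p * ((L : ℝ) * S) = (z : ℝ) * (p * L) := by
    field_simp at hz
    linear_combination (L : ℝ) * hz
  have hnat : ((K0 * L + K0 * p * A : ℕ) : ℝ) = ((z * (p * L) : ℤ) : ℝ) := by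
    push_cast
    rw [hA]
    linear_combination key2
  have hint : ((K0 * L + K0 * p * A : ℕ) : ℤ) = z * (p * L) := by
    exact_mod_cast hnat
  have hdvd : (p : ℤ) ∣ ((K0 * L : ℕ) : ℤ) := by
    refine ⟨z * L - K0 * A, ?_⟩
    push_cast at hint ⊢
    linear_combination hint
  have hdvdN : p ∣ K0 * L := by exact_mod_cast hdvd
  rcases (Nat.Prime.dvd_mul pp).mp hdvdN with hd | hd
  · have := Nat.le_of_dvd (by omega) hd; omega
  · obtain ⟨j, hjT, hpj⟩ := (pp.prime.dvd_finset_prod_iff _).mp hd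
    obtain ⟨hj1, hj2, hj3⟩ := hTj j hjT
    obtain ⟨c, hc⟩ := hpj
    have hc2 : 2 ≤ c := by
      rcases c with _ | _ | c
      · omega
      · omega
      · omega
    have : 2 * p ≤ j := by
      rw [hc]
      calc 2 * p = p * 2 := by ring
      _ ≤ p * c := Nat.mul_le_mul_left p hc2
    omega

set_option maxHeartbeats 3200000 in
lemma maximizer_no_intermediate_aux (n : ℕ) (hn : 2 ≤ n) (a : Fin n → ℝ)
    (ha : ∀ k, a k ∈ Set.Icc (0 : ℝ) 1)
    (hmax : ∀ b : Fin n → ℝ, (∀ k, b k ∈ Set.Icc (0 : ℝ) 1) →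
      (∑ k, b k) / (∑ k : Fin n, max ((k : ℝ) * b k) 1) ≤
      (∑ k, a k) / (∑ k : Fin n, max ((k : ℝ) * a k) 1)) :
    ∀ k : Fin n, 0 < (k : ℕ) → a k ≤ 1 / (k : ℝ) ∨ a k = 1 := by
  intro k hk
  by_contra hcon
  push_neg at hcon
  obtain ⟨h1, h2⟩ := hcon
  classical
  set K0 := (k : ℕ) with hK0
  set N := ∑ j, a j with hN
  set D := ∑ j : Fin n, max ((j : ℝ) * a j) 1 with hD
  clear_value K0 N D
  have hn0 : 0 < n := by omega
  have hnefin : Nonempty (Fin n) := ⟨⟨0, hn0⟩⟩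
  have hDpos : ∀ b : Fin n → ℝ, 0 < ∑ j : Fin n, max ((j : ℝ) * b j) 1 := fun b =>
    Finset.sum_pos (fun i _ => lt_of_lt_of_le one_pos (le_max_right _ _)) Finset.univ_nonempty
  have hD0 : 0 < D := by rw [hD]; exact hDpos a
  have hak1 : a k < 1 := lt_of_le_of_ne (ha k).2 h2
  have hK2 : 2 ≤ K0 := by
    by_contra hlt
    have hk1 : K0 = 1 := by omega
    rw [hk1] at h1
    simp at h1
    linarith [(ha k).2]
  have hKpos : (0 : ℝ) < (K0 : ℝ) := Nat.cast_pos.mpr (by omega)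
  have hcK : 1 < (K0 : ℝ) * a k := by
    rw [div_lt_iff₀ hKpos] at h1
    linarith [h1]
  have hak0 : 0 < a k := lt_trans (one_div_pos.mpr hKpos) h1
  have hNk : a k ≤ N := by
    rw [hN]; exact Finset.single_le_sum (fun i _ => (ha i).1) (Finset.mem_univ k)
  have hNpos : 0 < N := lt_of_lt_of_le hak0 hNk
  -- master perturbation inequality
  have key : ∀ (i : Fin n) (x : ℝ), 0 ≤ x → x ≤ 1 →
      (N - a i + x) * D ≤ N * (D - max ((i : ℝ) * a i) 1 + max ((i : ℝ) * x) 1) := by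
    intro i x hx0 hx1
    set b := Function.update a i x with hb
    have hbIcc : ∀ j, b j ∈ Set.Icc (0 : ℝ) 1 := by
      intro j
      by_cases hji : j = i
      · subst hji; rw [hb, Function.update_self]; exact ⟨hx0, hx1⟩
      · rw [hb, Function.update_of_ne hji]; exact ha j
    have hsb : ∑ j, b j = N - a i + x := by
      rw [hb, Finset.sum_update_of_mem (Finset.mem_univ i),
        Finset.sdiff_singleton_eq_erase, Finset.sum_erase_eq_sub (Finset.mem_univ i), ← hN]
      ring
    have hdb : ∑ j : Fin n, max ((j : ℝ) * b j) 1
        = D - max ((i : ℝ) * a i) 1 + max ((i : ℝ) * x) 1 := by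
      rw [← Finset.add_sum_erase _ (fun j : Fin n => max ((j : ℝ) * b j) 1) (Finset.mem_univ i)]
      have e1 : max ((i : ℝ) * b i) 1 = max ((i : ℝ) * x) 1 := by
        rw [hb, Function.update_self]
      have e2 : ∑ j ∈ Finset.univ.erase i, max ((j : ℝ) * b j) 1
          = ∑ j ∈ Finset.univ.erase i, max ((j : ℝ) * a j) 1 := by
        refine Finset.sum_congr rfl fun j hj => ?_
        rw [hb, Function.update_of_ne (Finset.ne_of_mem_erase hj)]
      rw [e1, e2, Finset.sum_erase_eq_sub (Finset.mem_univ i), ← hD]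
      ring
    have h := hmax b hbIcc
    rw [div_le_div_iff₀ (hDpos b) hD0, hsb, hdb] at h
    exact h
  -- D ≤ K0 * N
  have hDle : D ≤ (K0 : ℝ) * N := by
    have h := key k 1 zero_le_one le_rfl
    rw [← hK0] at h
    rw [mul_one, max_eq_left (le_of_lt hcK),
      max_eq_left (by exact_mod_cast (by omega : 1 ≤ K0) : (1:ℝ) ≤ (K0:ℝ))] at h
    have h1c : 0 < 1 - a k := by linarith
    have hmul : (1 - a k) * D ≤ (1 - a k) * ((K0 : ℝ) * N) := by nlinarith [h]
    exact le_of_mul_le_mul_left hmul h1c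
  -- K0 * N ≤ D
  have hKle : (K0 : ℝ) * N ≤ D := by
    have hx0 : (0 : ℝ) ≤ 1 / (K0 : ℝ) := le_of_lt (one_div_pos.mpr hKpos)
    have hx1 : 1 / (K0 : ℝ) ≤ 1 := by
      rw [div_le_one hKpos]; exact_mod_cast (by omega : 1 ≤ K0)
    have h := key k (1 / (K0 : ℝ)) hx0 hx1
    rw [← hK0] at h
    have e : (K0 : ℝ) * (1 / (K0 : ℝ)) = 1 := by field_simp
    rw [e, max_self, max_eq_left (le_of_lt hcK)] at h
    have e2 : N * (D - (K0 : ℝ) * a k + 1) = N * (D - (K0:ℝ) * (a k - 1 / (K0:ℝ))) := by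
      linear_combination (-N) * e
    rw [e2] at h
    have hδ : 0 < a k - 1 / (K0 : ℝ) := by linarith
    have hmul : (a k - 1 / (K0:ℝ)) * ((K0 : ℝ) * N) ≤ (a k - 1 / (K0:ℝ)) * D := by
      nlinarith [h]
    exact le_of_mul_le_mul_left hmul hδ
  have hDK : D = (K0 : ℝ) * N := le_antisymm hDle hKle
  -- all coordinates below k are 1
  have hsmall : ∀ j : Fin n, (j : ℕ) < K0 → a j = 1 := by
    intro j hj
    by_contra hne
    have haj : a j < 1 := lt_of_le_of_ne (ha j).2 hne
    have h := key j 1 zero_le_one le_rfl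
    rw [mul_one] at h
    have hb : max ((j : ℝ)) 1 ≤ max ((j : ℝ) * a j) 1 + (j : ℝ) * (1 - a j) := by
      apply max_le
      · nlinarith [le_max_left ((j:ℝ) * a j) 1]
      · exact le_add_of_le_of_nonneg (le_max_right _ _)
          (mul_nonneg (Nat.cast_nonneg _) (by linarith))
    have h2' : (N - a j + 1) * D ≤ N * (D + (j : ℝ) * (1 - a j)) := by
      calc (N - a j + 1) * D ≤ N * (D - max ((j:ℝ) * a j) 1 + max ((j:ℝ)) 1) := h
      _ ≤ N * (D + (j : ℝ) * (1 - a j)) := by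
          apply mul_le_mul_of_nonneg_left _ (le_of_lt hNpos)
          linarith [hb]
    have hmul : (1 - a j) * D ≤ (1 - a j) * ((j : ℝ) * N) := by nlinarith [h2']
    have hDJ : D ≤ (j : ℝ) * N := le_of_mul_le_mul_left hmul (by linarith)
    rw [hDK] at hDJ
    have hc1 : (K0 : ℝ) ≤ ((j : ℕ) : ℝ) := le_of_mul_le_mul_right (by linarith [hDJ]) hNpos
    have hc2 : K0 ≤ (j : ℕ) := by exact_mod_cast hc1
    omega
  -- all coordinates above k equal 1/j
  have hbig : ∀ j : Fin n, K0 < (j : ℕ) → a j = 1 / ((j : ℕ) : ℝ) := by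
    intro j hj
    have hJpos : (0 : ℝ) < ((j : ℕ) : ℝ) := Nat.cast_pos.mpr (by omega)
    have hx0 : (0 : ℝ) ≤ 1 / ((j:ℕ) : ℝ) := le_of_lt (one_div_pos.mpr hJpos)
    have hx1 : 1 / ((j:ℕ) : ℝ) ≤ 1 := by
      rw [div_le_one hJpos]; exact_mod_cast (by omega : 1 ≤ (j : ℕ))
    have e : ((j:ℕ) : ℝ) * (1 / ((j:ℕ) : ℝ)) = 1 := by field_simp
    have step1 : ((j:ℕ) : ℝ) * a j ≤ 1 := by
      by_contra hgt
      push_neg at hgt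
      have h := key j (1 / ((j:ℕ) : ℝ)) hx0 hx1
      rw [e, max_self, max_eq_left (le_of_lt hgt)] at h
      have e2 : N * (D - ((j:ℕ) : ℝ) * a j + 1)
          = N * (D - ((j:ℕ):ℝ) * (a j - 1 / ((j:ℕ):ℝ))) := by
        linear_combination (-N) * e
      rw [e2] at h
      have hδ : 0 < a j - 1 / ((j:ℕ) : ℝ) := by
        have hd : 1 / ((j:ℕ):ℝ) < a j := by
          rw [div_lt_iff₀ hJpos]; linarith [hgt]
        linarith [hd]
      have hmul : (a j - 1 / ((j:ℕ):ℝ)) * (((j:ℕ) : ℝ) * N)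
          ≤ (a j - 1 / ((j:ℕ):ℝ)) * D := by nlinarith [h]
      have hJN : ((j:ℕ) : ℝ) * N ≤ D := le_of_mul_le_mul_left hmul hδ
      rw [hDK] at hJN
      have hc1 : ((j:ℕ) : ℝ) ≤ (K0 : ℝ) := le_of_mul_le_mul_right (by linarith) hNpos
      have hc2 : (j : ℕ) ≤ K0 := by exact_mod_cast hc1
      omega
    have hle : a j ≤ 1 / ((j:ℕ) : ℝ) := by
      rw [le_div_iff₀ hJpos]; linarith [step1]
    by_contra hne2
    have hlt : a j < 1 / ((j:ℕ) : ℝ) := lt_of_le_of_ne hle hne2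
    have h := key j (1 / ((j:ℕ) : ℝ)) hx0 hx1
    rw [e, max_self, max_eq_right step1] at h
    have e3 : D - 1 + 1 = D := by ring
    rw [e3] at h
    have hpos : 0 < (1 / ((j:ℕ):ℝ) - a j) * D := mul_pos (by linarith) hD0
    have heq2 : (N - a j + 1 / ((j:ℕ):ℝ)) * D = N * D + (1 / ((j:ℕ):ℝ) - a j) * D := by
      ring
    rw [heq2] at h
    linarith [hpos]
  -- evaluate the sums
  have hzero : ∑ i : Fin n, ((K0 : ℝ) * a i - max ((i : ℝ) * a i) 1) = 0 := by
    rw [Finset.sum_sub_distrib, ← Finset.mul_sum, ← hN, ← hD, hDK]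
    ring
  obtain ⟨u, hu⟩ : ∃ u : ℕ → ℝ, u = fun j =>
      if j = K0 then 0 else if j < K0 then (K0 : ℝ) - max (j : ℝ) 1 else (K0 : ℝ) / (j : ℝ) - 1 :=
    ⟨_, rfl⟩
  have hterm : ∀ i : Fin n, (K0 : ℝ) * a i - max ((i : ℝ) * a i) 1 = u (i : ℕ) := by
    intro i
    rcases lt_trichotomy (i : ℕ) K0 with hlt | heq | hgt
    · rw [hsmall i hlt]
      simp only [hu, if_neg (by omega : ¬ (i:ℕ) = K0), if_pos hlt]
      rw [mul_one, mul_one]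
    · have hik : i = k := Fin.ext (heq.trans hK0)
      subst hik
      rw [← hK0, max_eq_left (le_of_lt hcK)]
      simp [hu]
    · rw [hbig i hgt]
      simp only [hu, if_neg (by omega : ¬ (i:ℕ) = K0), if_neg (by omega : ¬ (i:ℕ) < K0)]
      have hJ0 : ((i : ℕ) : ℝ) ≠ 0 := Nat.cast_ne_zero.mpr (by omega)
      rw [mul_one_div, mul_one_div, div_self hJ0, max_self]
  have hsum0 : ∑ j ∈ Finset.range n, u j = 0 := by
    rw [← Fin.sum_univ_eq_sum_range u n]
    calc ∑ i : Fin n, u (i : ℕ)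
        = ∑ i : Fin n, ((K0 : ℝ) * a i - max ((i : ℝ) * a i) 1) :=
          Finset.sum_congr rfl fun i _ => (hterm i).symm
      _ = 0 := hzero
  have hkn : K0 + 1 ≤ n := by have := k.isLt; omega
  have hsplit : ∑ j ∈ Finset.range K0, u j + u K0 + ∑ j ∈ Finset.Ico (K0+1) n, u j = 0 := by
    have h1s := Finset.sum_Ico_consecutive u (Nat.zero_le (K0+1)) hkn
    rw [Finset.range_eq_Ico, ← h1s, ← Finset.range_eq_Ico, Finset.sum_range_succ] at hsum0
    linarith [hsum0]
  set Cn := ∑ j ∈ Finset.range K0, max j 1 with hCn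
  clear_value Cn
  have hS1 : ∑ j ∈ Finset.range K0, u j = (K0 : ℝ) * K0 - (Cn : ℝ) := by
    have e1 : ∑ j ∈ Finset.range K0, u j
        = ∑ j ∈ Finset.range K0, ((K0 : ℝ) - max (j : ℝ) 1) := by
      refine Finset.sum_congr rfl fun j hj => ?_
      rw [Finset.mem_range] at hj
      simp only [hu, if_neg (by omega : ¬ j = K0), if_pos hj]
    rw [e1, Finset.sum_sub_distrib, Finset.sum_const, Finset.card_range, nsmul_eq_mul]
    congr 1
    rw [hCn, Nat.cast_sum]
    exact Finset.sum_congr rfl fun j _ => by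
      rw [Nat.cast_max, Nat.cast_one]
  have hu0 : u K0 = 0 := by simp only [hu, if_pos rfl]
  set S := ∑ j ∈ Finset.Ico (K0+1) n, 1 / (j : ℝ) with hSdef
  clear_value S
  have hS2 : ∑ j ∈ Finset.Ico (K0+1) n, u j = (K0 : ℝ) * S - ((n - (K0+1) : ℕ) : ℝ) := by
    have e1 : ∑ j ∈ Finset.Ico (K0+1) n, u j
        = ∑ j ∈ Finset.Ico (K0+1) n, ((K0 : ℝ) * (1 / (j : ℝ)) - 1) := by
      refine Finset.sum_congr rfl fun j hj => ?_
      rw [Finset.mem_Ico] at hj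
      simp only [hu, if_neg (by omega : ¬ j = K0), if_neg (by omega : ¬ j < K0)]
      rw [mul_one_div]
    rw [e1, Finset.sum_sub_distrib, ← Finset.mul_sum, ← hSdef, Finset.sum_const, Nat.card_Ico,
      nsmul_eq_mul, mul_one]
  have hSnn : 0 ≤ S := by
    rw [hSdef]; exact Finset.sum_nonneg fun j _ => by positivity
  have hz : (K0 : ℝ) * S = (((n : ℤ) - K0 - 1 - K0 * K0 + Cn : ℤ) : ℝ) := by
    have hc : ((n - (K0+1) : ℕ) : ℝ) = (n : ℝ) - K0 - 1 := by
      rw [Nat.cast_sub hkn]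
      push_cast
      ring
    rw [hS1, hu0, hS2, hc] at hsplit
    push_cast
    linarith [hsplit]
  have hC2 : Cn * 2 = K0 * (K0 - 1) + 2 := by
    rw [hCn]; exact aux_gauss K0 (by omega)
  have h2n : 2 * K0 < n := by
    have h1r : (0:ℝ) ≤ (K0 : ℝ) * S := mul_nonneg (Nat.cast_nonneg _) hSnn
    rw [hz] at h1r
    have hC2r : (Cn : ℝ) * 2 = (K0 : ℝ) * ((K0 : ℝ) - 1) + 2 := by
      have h' := hC2
      have : ((Cn * 2 : ℕ) : ℝ) = ((K0 * (K0 - 1) + 2 : ℕ) : ℝ) := by exact_mod_cast congrArg (Nat.cast (R := ℝ)) h'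
      push_cast [Nat.cast_sub (show 1 ≤ K0 by omega)] at this
      linarith [this]
    have hK2r : (2 : ℝ) ≤ (K0 : ℝ) := by exact_mod_cast hK2
    push_cast at h1r
    have hsq : (2:ℝ) * K0 ≤ (K0:ℝ) * K0 :=
      mul_le_mul_of_nonneg_right hK2r (by linarith)
    have hfin : ((2 * K0 : ℕ) : ℝ) < (n : ℝ) := by push_cast; linarith [hC2r, h1r, hsq]
    exact_mod_cast hfin
  rw [hSdef] at hz
  exact no_int_sum K0 n hK2 h2n ((n : ℤ) - K0 - 1 - K0 * K0 + Cn) hz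

/-- Observation 3: in a sequence `a ∈ [0,1]^n` maximizing the ratio
`(Σ_k a_k)/(Σ_k max(k·a_k, 1))`, there is no index `k > 0` with `1/k < a_k < 1`. -/
theorem maximizer_no_intermediate (n : ℕ) (hn : 2 ≤ n) (a : Fin n → ℝ)
    (ha : ∀ k, a k ∈ Set.Icc (0 : ℝ) 1)
    (hmax : ∀ b : Fin n → ℝ, (∀ k, b k ∈ Set.Icc (0 : ℝ) 1) →
      (∑ k, b k) / (∑ k : Fin n, max ((k : ℝ) * b k) 1) ≤
      (∑ k, a k) / (∑ k : Fin n, max ((k : ℝ) * a k) 1)) :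
    ∀ k : Fin n, 0 < (k : ℕ) → a k ≤ 1 / (k : ℝ) ∨ a k = 1 :=
  maximizer_no_intermediate_aux n hn a ha hmax
end

section
/- For a maximizing sequence of the ratio R(a) = (Σ_k a_k)/(Σ_k max(k·a_k,1)) over a ∈ [0,1]^n, the sequence is weakly decreasing: if k < k' then a_k ≥ a_{k'}. -/
/-!
If `a k < a k'` for some `k < k'`, the maximizer can be improved. When `k' * a k' ≤ 1`, both
entries sit on the flat part of `t ↦ max t 1`, so raising `a k` to `a k'` increases the numerator
and leaves the denominator unchanged. Otherwise swapping `a k` and `a k'` keeps the numerator,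
and the denominator strictly drops by a rearrangement inequality for the convex increasing
function `t ↦ max t 1`.
-/

open Finset Function

variable {ι : Type*} [Fintype ι]

lemma max_one_rearrangement_lt {c c' x x' : ℝ} (hc : c < c') (hx : 0 ≤ x) (hxx : x < x')
    (h1 : 1 < c' * x') :
    max (c * x') 1 + max (c' * x) 1 < max (c * x) 1 + max (c' * x') 1 := by
  have hc' : 0 < c' := pos_of_mul_pos_left (one_pos.trans h1) (hx.trans_lt hxx).le
  have : 1 ≤ max (c * x) 1 := le_max_right _ _
  have : c * x ≤ max (c * x) 1 := le_max_left _ _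
  rw [max_eq_left h1.le]
  rcases max_cases (c * x') 1 with ⟨h2, -⟩ | ⟨h2, -⟩ <;>
    rcases max_cases (c' * x) 1 with ⟨h3, -⟩ | ⟨h3, -⟩ <;>
    rw [h2, h3] <;> nlinarith

lemma sum_comp_swap_add {β M : Type*} [AddCommMonoid M] [DecidableEq ι] (φ : ι → β → M)
    (a : ι → β) {i j : ι} (hij : i ≠ j) :
    ∑ k, φ k (a (Equiv.swap i j k)) + (φ i (a i) + φ j (a j)) =
      ∑ k, φ k (a k) + (φ i (a j) + φ j (a i)) := by
  rw [← sum_add_sum_compl {i, j}, ← sum_add_sum_compl {i, j} (fun k ↦ φ k (a k)),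
    sum_pair hij, sum_pair hij, Equiv.swap_apply_left, Equiv.swap_apply_right,
    sum_congr rfl fun k hk ↦ by
      rw [Equiv.swap_apply_of_ne_of_ne (by simp_all) (by simp_all)]]
  abel

noncomputable def ratioDen (w a : ι → ℝ) : ℝ := ∑ k, max (w k * a k) 1

noncomputable def ratio (w a : ι → ℝ) : ℝ := (∑ k, a k) / ratioDen w a

lemma ratioDen_pos [Nonempty ι] (w a : ι → ℝ) : 0 < ratioDen w a :=
  sum_pos (fun _ _ ↦ one_pos.trans_le (le_max_right _ _)) univ_nonempty

lemma ratio_lt_ratio_update [DecidableEq ι] {w a : ι → ℝ} {i : ι} {x : ℝ} (hlt : a i < x)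
    (hai : w i * a i ≤ 1) (hx : w i * x ≤ 1) :
    ratio w a < ratio w (update a i x) := by
  have : Nonempty ι := ⟨i⟩
  have hden : ratioDen w (update a i x) = ratioDen w a := by
    refine sum_congr rfl fun k _ ↦ ?_
    rcases eq_or_ne k i with rfl | hk
    · rw [update_self, max_eq_right hx, max_eq_right hai]
    · rw [update_of_ne hk]
  have hnum : ∑ k, update a i x k = ∑ k, a k + (x - a i) := by
    rw [sum_update_of_mem (mem_univ i), ← add_sum_erase _ _ (mem_univ i),
      sdiff_singleton_eq_erase]
    ring
  rw [ratio, ratio, hden, hnum]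
  gcongr
  · exact ratioDen_pos w a
  · linarith

lemma ratioDen_comp_swap_lt [DecidableEq ι] {w a : ι → ℝ} (ha : ∀ k, 0 ≤ a k) {i j : ι}
    (hw : w i < w j) (hlt : a i < a j) (h1 : 1 < w j * a j) :
    ratioDen w (a ∘ Equiv.swap i j) < ratioDen w a := by
  have hij : i ≠ j := fun h ↦ hw.ne (congrArg w h)
  have hsum := sum_comp_swap_add (fun k t ↦ max (w k * t) 1) a hij
  have hpair := max_one_rearrangement_lt hw (ha i) hlt h1
  unfold ratioDen
  dsimp only [comp_apply] at hsum ⊢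
  linarith

lemma ratio_lt_ratio_comp_swap [DecidableEq ι] {w a : ι → ℝ} (ha : ∀ k, 0 ≤ a k) {i j : ι}
    (hw : w i < w j) (hlt : a i < a j) (h1 : 1 < w j * a j) :
    ratio w a < ratio w (a ∘ Equiv.swap i j) := by
  have : Nonempty ι := ⟨i⟩
  have hnum : 0 < ∑ k, a k :=
    ((ha i).trans_lt hlt).trans_le (single_le_sum (fun k _ ↦ ha k) (mem_univ j))
  rw [ratio, ratio, comp_def, Equiv.sum_comp (Equiv.swap i j) a, ← comp_def]
  exact div_lt_div_of_pos_left hnum (ratioDen_pos _ _) (ratioDen_comp_swap_lt ha hw hlt h1)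

theorem maximizer_weakly_decreasing_general (n : ℕ) (a : Fin n → ℝ)
    (ha : ∀ k, a k ∈ Set.Icc (0 : ℝ) 1)
    (hmax : ∀ b : Fin n → ℝ, (∀ k, b k ∈ Set.Icc (0 : ℝ) 1) →
      (∑ k, b k) / (∑ k : Fin n, max ((k : ℝ) * b k) 1) ≤
      (∑ k, a k) / (∑ k : Fin n, max ((k : ℝ) * a k) 1)) :
    ∀ k k' : Fin n, k < k' → a k' ≤ a k := by
  intro k k' hkk'
  by_contra! hlt
  have hw : (k : ℝ) < k' := by exact_mod_cast hkk'
  have hak := (ha k).1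
  rcases le_or_gt ((k' : ℝ) * a k') 1 with hflat | hsteep
  · have hbox : ∀ j, update a k (a k') j ∈ Set.Icc (0 : ℝ) 1 :=
      forall_update_iff a (p := fun _ t ↦ t ∈ Set.Icc (0 : ℝ) 1) |>.2 ⟨ha k', fun j _ ↦ ha j⟩
    refine (hmax _ hbox).not_gt (ratio_lt_ratio_update (w := fun j : Fin n ↦ (j : ℝ)) hlt ?_ ?_) <;>
      nlinarith
  · exact (hmax _ fun j ↦ ha _).not_gt
      (ratio_lt_ratio_comp_swap (w := fun j : Fin n ↦ (j : ℝ)) (fun j ↦ (ha j).1) hw hlt hsteep)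

/-- Observation 2: a sequence `a ∈ [0,1]^n` maximizing the ratio
`(Σ_k a_k)/(Σ_k max(k·a_k, 1))` is weakly decreasing. -/
theorem maximizer_weakly_decreasing (n : ℕ) (hn : 2 ≤ n) (a : Fin n → ℝ)
    (ha : ∀ k, a k ∈ Set.Icc (0 : ℝ) 1)
    (hmax : ∀ b : Fin n → ℝ, (∀ k, b k ∈ Set.Icc (0 : ℝ) 1) →
      (∑ k, b k) / (∑ k : Fin n, max ((k : ℝ) * b k) 1) ≤
      (∑ k, a k) / (∑ k : Fin n, max ((k : ℝ) * a k) 1)) :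
    ∀ k k' : Fin n, k < k' → a k' ≤ a k :=
  maximizer_weakly_decreasing_general n a ha hmax
end

section
/- Counting holes via neighbor-pairs (convex case): if each hole corresponds to at least 3 neighbor-pairs, each neighbor-pair corresponds to at most 2 holes, at least 3 neighbor-pairs correspond to at most 1 hole, and the number of neighbor-pairs is at most 3m − 6, then the number of holes is at most 2m − 5. -/
/-- Counting holes via neighbor-pairs (convex case): if each hole is incident to at least
3 neighbor-pairs, each pair is incident to at most 2 holes, there are at least 3 pairs
each incident to at most 1 hole, and there are at most `3m - 6` pairs, then there are at
most `2m - 5` holes. -/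
theorem count_holes_convex {α β : Type*} [DecidableEq α] [DecidableEq β]
    (holes : Finset α) (pairs : Finset β) (I : α → β → Prop)
    [∀ h p, Decidable (I h p)] (m : ℕ)
    (hHole : ∀ h ∈ holes, 3 ≤ (pairs.filter (fun p => I h p)).card)
    (hPair : ∀ p ∈ pairs, (holes.filter (fun h => I h p)).card ≤ 2)
    (hBoundary : ∃ P₀ : Finset β, P₀ ⊆ pairs ∧ 3 ≤ P₀.card ∧
      ∀ p ∈ P₀, (holes.filter (fun h => I h p)).card ≤ 1)
    (hPairs : (pairs.card : ℤ) ≤ 3 * m - 6) :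
    (holes.card : ℤ) ≤ 2 * m - 5 := by
  obtain ⟨P₀, hsub, hP₀card, hP₀⟩ := hBoundary
  have hswap : ∑ h ∈ holes, (pairs.filter (fun p => I h p)).card
      = ∑ p ∈ pairs, (holes.filter (fun h => I h p)).card := by
    simp only [Finset.card_filter]
    rw [Finset.sum_comm]
  have h1 : 3 * holes.card ≤ ∑ h ∈ holes, (pairs.filter (fun p => I h p)).card := by
    calc 3 * holes.card = ∑ _h ∈ holes, 3 := by
          rw [Finset.sum_const, smul_eq_mul, mul_comm]
      _ ≤ _ := Finset.sum_le_sum hHole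
  have h2 : ∑ p ∈ pairs, (holes.filter (fun h => I h p)).card
      ≤ 2 * pairs.card - P₀.card := by
    rw [← Finset.sum_sdiff hsub]
    have hA : ∑ p ∈ P₀, (holes.filter (fun h => I h p)).card ≤ P₀.card := by
      calc _ ≤ ∑ _p ∈ P₀, 1 := Finset.sum_le_sum hP₀
        _ = P₀.card := by simp
    have hB : ∑ p ∈ pairs \ P₀, (holes.filter (fun h => I h p)).card
        ≤ 2 * (pairs.card - P₀.card) := by
      calc _ ≤ ∑ _p ∈ pairs \ P₀, 2 :=
            Finset.sum_le_sum fun p hp => hPair p (Finset.mem_sdiff.mp hp).1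
        _ = 2 * (pairs.card - P₀.card) := by
            rw [Finset.sum_const, smul_eq_mul, Finset.card_sdiff_of_subset hsub, mul_comm]
    have hle : P₀.card ≤ pairs.card := Finset.card_le_card hsub
    omega
  have key : 3 * holes.card ≤ 2 * pairs.card - P₀.card := by omega
  have hle : P₀.card ≤ pairs.card := Finset.card_le_card hsub
  have : (3 : ℤ) * holes.card ≤ 2 * pairs.card - P₀.card := by
    omega
  have : (3 : ℤ) * holes.card ≤ 6 * m - 15 := by
    have h3 : (3 : ℤ) ≤ P₀.card := by exact_mod_cast hP₀card
    nlinarith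
  linarith
end
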